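/- Let X_1,…,X_m and Y_1,…,Y_m be bases of 𝔥 that are dual with respect to Q_𝔥 (Q_𝔥(X_r,Y_s) = δ_{rs}), and for X ∈ 𝔥 set ãd(X) := (1/4) Σ_{i,j} ⟨[X,Z_i], Z_j⟩ Z_i·Z_j ∈ Cl(𝔪) (note [X,Z_i] ∈ 𝔪). Then the lifted Casimir element of 𝔥 satisfies C̃_𝔥 := −Σ_r ãd(X_r)·ãd(Y_r) = −(1/16) Σ_{j,k,l,p} Q_𝔥([Z_j,Z_k]_𝔥, [Z_l,Z_p]_𝔥) Z_j·Z_k·Z_l·Z_p. -/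

import Mathlib

/-!
Invariance of `Q` turns each coefficient `⟨[X, Z_j], Z_k⟩` of `ãd(X)`, for `X ∈ 𝔥`, into
`Q(X, [Z_j, Z_k]_𝔥)`, since `Q(𝔥, 𝔪) = 0`. Multiplying out `ãd(X_r)·ãd(Y_r)` and summing over
the dual bases, the coefficients collapse by `Σ_r Q(X_r, a)·Q(Y_r, b) = Q(a, b)` for `a ∈ 𝔥`.
-/

open scoped BigOperators

/-- The quadratic form `v ↦ −⟨v,v⟩` on the subspace `𝔪`, built from a bilinear form on
the ambient space; the associated Clifford algebra satisfies
`v·w + w·v = −2⟨v,w⟩·1` for `v,w ∈ 𝔪`. -/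
noncomputable def mQF {𝔤 : Type*} [AddCommGroup 𝔤] [Module ℝ 𝔤]
    (𝔪 : Submodule ℝ 𝔤) (B : LinearMap.BilinForm ℝ 𝔤) : QuadraticForm ℝ ↥𝔪 :=
  LinearMap.BilinMap.toQuadraticMap ((-B).compl₁₂ 𝔪.subtype 𝔪.subtype)

/-- The lift `ãd(W) = (1/4) Σ_{i,j} ⟨[W,Z_i],Z_j⟩ Z_i·Z_j ∈ Cl(𝔪)` of the isotropy
representation of `W ∈ 𝔥`. -/
noncomputable def adTilde {𝔤 : Type*} [LieRing 𝔤] [LieAlgebra ℝ 𝔤]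
    (𝔪 : Submodule ℝ 𝔤) (Q : LinearMap.BilinForm ℝ 𝔤)
    {n : ℕ} (Z : Fin n → 𝔤) (hZ𝔪 : ∀ i, Z i ∈ 𝔪) (W : 𝔤) :
    CliffordAlgebra (mQF 𝔪 Q) :=
  (1 / 4 : ℝ) • ∑ i, ∑ j, Q ⁅W, Z i⁆ (Z j) •
    (CliffordAlgebra.ι (mQF 𝔪 Q) ⟨Z i, hZ𝔪 i⟩ *
      CliffordAlgebra.ι (mQF 𝔪 Q) ⟨Z j, hZ𝔪 j⟩)

section LieInvariant

variable {R L : Type*} [CommRing R] [LieRing L] [LieAlgebra R L]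

theorem LinearMap.BilinForm.apply_lie_left_eq_apply_lie {Q : LinearMap.BilinForm R L}
    (hQinv : ∀ w u v : L, Q ⁅w, u⁆ v + Q u ⁅w, v⁆ = 0) (w u v : L) :
    Q ⁅w, u⁆ v = Q w ⁅u, v⁆ := by
  have h := hQinv u w v
  rw [← lie_skew u w, map_neg, LinearMap.neg_apply] at h
  linear_combination -h

theorem LinearMap.BilinForm.apply_lie_left_eq_apply_proj {Q : LinearMap.BilinForm R L}
    (hQinv : ∀ w u v : L, Q ⁅w, u⁆ v + Q u ⁅w, v⁆ = 0) {𝔥 𝔪 : Submodule R L}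
    (hQ𝔥𝔪 : ∀ x ∈ 𝔥, ∀ y ∈ 𝔪, Q x y = 0) {p𝔥 p𝔪 : L →ₗ[R] L}
    (hsum : ∀ x, p𝔥 x + p𝔪 x = x) (hmem𝔪 : ∀ x, p𝔪 x ∈ 𝔪)
    {w : L} (hw : w ∈ 𝔥) (u v : L) :
    Q ⁅w, u⁆ v = Q w (p𝔥 ⁅u, v⁆) := by
  rw [Q.apply_lie_left_eq_apply_lie hQinv, ← hsum ⁅u, v⁆, map_add,
    hQ𝔥𝔪 w hw _ (hmem𝔪 _), add_zero, hsum]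

end LieInvariant

section DualBasis

variable {R M ι : Type*} [CommRing R] [AddCommGroup M] [Module R M] [Fintype ι]
  [DecidableEq ι] {Q : LinearMap.BilinForm R M} {H : Submodule R M} {X Y : ι → M}

theorem LinearMap.BilinForm.sum_apply_smul_eq_of_dual
    (hnd : ∀ x ∈ H, (∀ y ∈ H, Q x y = 0) → x = 0) (hY : ∀ r, Y r ∈ H)
    (hdual : ∀ r s, Q (Y r) (X s) = if r = s then 1 else 0)
    (hX : H ≤ Submodule.span R (Set.range X)) {a : M} (ha : a ∈ H) :
    ∑ r, Q a (X r) • Y r = a := by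
  rw [← sub_eq_zero]
  refine hnd _ (sub_mem (sum_mem fun r _ => H.smul_mem _ (hY r)) ha) fun y hy => ?_
  suffices H ≤ LinearMap.ker (Q (∑ r, Q a (X r) • Y r - a)) from this hy
  refine hX.trans (Submodule.span_le.mpr ?_)
  rintro _ ⟨s, rfl⟩
  simp [hdual]

theorem LinearMap.BilinForm.sum_apply_mul_apply_of_dual
    (hQsymm : ∀ x y, Q x y = Q y x)
    (hnd : ∀ x ∈ H, (∀ y ∈ H, Q x y = 0) → x = 0) (hY : ∀ r, Y r ∈ H)
    (hdual : ∀ r s, Q (X r) (Y s) = if r = s then 1 else 0)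
    (hX : H ≤ Submodule.span R (Set.range X)) {a : M} (ha : a ∈ H) (b : M) :
    ∑ r, Q (X r) a * Q (Y r) b = Q a b := by
  have hdual' : ∀ r s, Q (Y r) (X s) = if r = s then 1 else 0 := fun r s => by
    rw [hQsymm, hdual]
    simp only [eq_comm]
  conv_rhs => rw [← Q.sum_apply_smul_eq_of_dual hnd hY hdual' hX ha]
  simp [hQsymm a]

end DualBasis

theorem sum_quadratic_mul_quadratic {R A ι κ : Type*} [CommSemiring R] [Semiring A]
    [Algebra R A] [Fintype ι] [Fintype κ] (e : ι → A) (a b : κ → ι → ι → R) :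
    ∑ r, (∑ i, ∑ j, a r i j • (e i * e j)) * (∑ k, ∑ l, b r k l • (e k * e l)) =
      ∑ i, ∑ j, ∑ k, ∑ l, (∑ r, a r i j * b r k l) • (e i * e j * e k * e l) := by
  simp only [Finset.sum_mul]
  simp only [Finset.mul_sum, smul_mul_smul_comm, Finset.sum_smul, mul_assoc]
  exact Finset.sum_comm.trans <| Finset.sum_congr rfl fun i _ =>
    Finset.sum_comm.trans <| Finset.sum_congr rfl fun j _ =>
      Finset.sum_comm.trans <| Finset.sum_congr rfl fun k _ => Finset.sum_comm

theorem stmt11_general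
    {𝔤 : Type*} [LieRing 𝔤] [LieAlgebra ℝ 𝔤]
    (𝔥 𝔪 : Submodule ℝ 𝔤)
    (p𝔥 p𝔪 : 𝔤 →ₗ[ℝ] 𝔤)
    (hsum : ∀ x, p𝔥 x + p𝔪 x = x)
    (hmem𝔥 : ∀ x, p𝔥 x ∈ 𝔥) (hmem𝔪 : ∀ x, p𝔪 x ∈ 𝔪)
    (Q : LinearMap.BilinForm ℝ 𝔤)
    (hQsymm : ∀ x y, Q x y = Q y x)
    (hQinv : ∀ w u v : 𝔤, Q ⁅w, u⁆ v + Q u ⁅w, v⁆ = 0)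
    (hQ𝔥𝔪 : ∀ x ∈ 𝔥, ∀ y ∈ 𝔪, Q x y = 0)
    (hQ𝔥nd : ∀ x ∈ 𝔥, (∀ y ∈ 𝔥, Q x y = 0) → x = 0)
    {n : ℕ} (Z : Fin n → 𝔤) (hZ𝔪 : ∀ i, Z i ∈ 𝔪)
    {m : ℕ} (X Y : Fin m → 𝔤)
    (hX𝔥 : ∀ r, X r ∈ 𝔥) (hY𝔥 : ∀ r, Y r ∈ 𝔥)
    (hdual : ∀ r s, Q (X r) (Y s) = if r = s then 1 else 0)
    (hXspan : Submodule.span ℝ (Set.range X) = 𝔥) :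
    -∑ r, adTilde 𝔪 Q Z hZ𝔪 (X r) * adTilde 𝔪 Q Z hZ𝔪 (Y r) =
      (-(1 / 16) : ℝ) • ∑ j, ∑ k, ∑ l, ∑ p,
        Q (p𝔥 ⁅Z j, Z k⁆) (p𝔥 ⁅Z l, Z p⁆) •
          (CliffordAlgebra.ι (mQF 𝔪 Q) ⟨Z j, hZ𝔪 j⟩ *
            CliffordAlgebra.ι (mQF 𝔪 Q) ⟨Z k, hZ𝔪 k⟩ *
            CliffordAlgebra.ι (mQF 𝔪 Q) ⟨Z l, hZ𝔪 l⟩ *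
            CliffordAlgebra.ι (mQF 𝔪 Q) ⟨Z p, hZ𝔪 p⟩) := by
  have hproj {w : 𝔤} (hw : w ∈ 𝔥) (u v : 𝔤) : Q ⁅w, u⁆ v = Q w (p𝔥 ⁅u, v⁆) :=
    Q.apply_lie_left_eq_apply_proj hQinv hQ𝔥𝔪 hsum hmem𝔪 hw u v
  have hscalar (i j k l : Fin n) : ∑ r, Q ⁅X r, Z i⁆ (Z j) * Q ⁅Y r, Z k⁆ (Z l) =
      Q (p𝔥 ⁅Z i, Z j⁆) (p𝔥 ⁅Z k, Z l⁆) := by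
    simp only [hproj (hX𝔥 _), hproj (hY𝔥 _)]
    exact Q.sum_apply_mul_apply_of_dual hQsymm hQ𝔥nd hY𝔥 hdual hXspan.ge (hmem𝔥 _) _
  simp only [adTilde, smul_mul_smul_comm, ← Finset.smul_sum, sum_quadratic_mul_quadratic,
    hscalar, neg_smul]
  norm_num

/-- For dual bases `X_r, Y_r` of `𝔥` with respect to `Q_𝔥`, the lifted
Casimir element satisfies
`C̃_𝔥 = −Σ_r ãd(X_r)·ãd(Y_r)
     = −(1/16) Σ_{j,k,l,p} Q_𝔥([Z_j,Z_k]_𝔥,[Z_l,Z_p]_𝔥) Z_j·Z_k·Z_l·Z_p`. -/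
theorem stmt11
    {𝔤 : Type*} [LieRing 𝔤] [LieAlgebra ℝ 𝔤] [FiniteDimensional ℝ 𝔤]
    (𝔥 𝔪 : Submodule ℝ 𝔤)
    (p𝔥 p𝔪 : 𝔤 →ₗ[ℝ] 𝔤)
    (hsum : ∀ x, p𝔥 x + p𝔪 x = x)
    (hmem𝔥 : ∀ x, p𝔥 x ∈ 𝔥) (hmem𝔪 : ∀ x, p𝔪 x ∈ 𝔪)
    (hid𝔥 : ∀ x ∈ 𝔥, p𝔥 x = x) (hid𝔪 : ∀ x ∈ 𝔪, p𝔪 x = x)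
    (hsub : ∀ x ∈ 𝔥, ∀ y ∈ 𝔥, ⁅x, y⁆ ∈ 𝔥)
    (hhm : ∀ x ∈ 𝔥, ∀ y ∈ 𝔪, ⁅x, y⁆ ∈ 𝔪)
    (Q : LinearMap.BilinForm ℝ 𝔤)
    (hQsymm : ∀ x y, Q x y = Q y x)
    (hQinv : ∀ w u v : 𝔤, Q ⁅w, u⁆ v + Q u ⁅w, v⁆ = 0)
    (hQ𝔥𝔪 : ∀ x ∈ 𝔥, ∀ y ∈ 𝔪, Q x y = 0)
    (hQpos𝔪 : ∀ x ∈ 𝔪, x ≠ 0 → 0 < Q x x)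
    (hQ𝔥nd : ∀ x ∈ 𝔥, (∀ y ∈ 𝔥, Q x y = 0) → x = 0)
    {n : ℕ} (Z : Fin n → 𝔤) (hZ𝔪 : ∀ i, Z i ∈ 𝔪)
    (hZon : ∀ i j, Q (Z i) (Z j) = if i = j then 1 else 0)
    (hZspan : Submodule.span ℝ (Set.range Z) = 𝔪)
    {m : ℕ} (X Y : Fin m → 𝔤)
    (hX𝔥 : ∀ r, X r ∈ 𝔥) (hY𝔥 : ∀ r, Y r ∈ 𝔥)
    (hdual : ∀ r s, Q (X r) (Y s) = if r = s then 1 else 0)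
    (hXspan : Submodule.span ℝ (Set.range X) = 𝔥)
    (hYspan : Submodule.span ℝ (Set.range Y) = 𝔥) :
    -∑ r, adTilde 𝔪 Q Z hZ𝔪 (X r) * adTilde 𝔪 Q Z hZ𝔪 (Y r) =
      (-(1 / 16) : ℝ) • ∑ j, ∑ k, ∑ l, ∑ p,
        Q (p𝔥 ⁅Z j, Z k⁆) (p𝔥 ⁅Z l, Z p⁆) •
          (CliffordAlgebra.ι (mQF 𝔪 Q) ⟨Z j, hZ𝔪 j⟩ *
            CliffordAlgebra.ι (mQF 𝔪 Q) ⟨Z k, hZ𝔪 k⟩ *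
            CliffordAlgebra.ι (mQF 𝔪 Q) ⟨Z l, hZ𝔪 l⟩ *
            CliffordAlgebra.ι (mQF 𝔪 Q) ⟨Z p, hZ𝔪 p⟩) :=
  stmt11_general 𝔥 𝔪 p𝔥 p𝔪 hsum hmem𝔥 hmem𝔪 Q hQsymm hQinv hQ𝔥𝔪 hQ𝔥nd Z hZ𝔪 X Y hX𝔥 hY𝔥 hdual hXspan
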